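/- Let (C, ▷, †) be a guarded Conway category. Define Tr^X_{A,B}(f) = π_r ∘ f ∘ (p_X × id_A) ∘ ⟨(π_ℓ ∘ f)†, id_A⟩ for f : ▷X × A → X × B. Then Tr satisfies the yanking axiom: Tr^X_{X,▷X}(c) = p_X, where c : ▷X × X → X × ▷X is the symmetry isomorphism. -/

import Mathlib

open CategoryTheory CategoryTheory.Limits

/-- The trace induced by a guarded dagger:
`Tr^X_{A,B}(f) = π_r ∘ f ∘ (p_X × id_A) ∘ ⟨(π_ℓ ∘ f)†, id_A⟩`. -/
noncomputable def TrD {C : Type*} [Category C] [HasFiniteProducts C]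
    (F : C ⥤ C) (p : 𝟭 C ⟶ F)
    (dag : ∀ {X Y : C}, (F.obj X ⨯ Y ⟶ X) → (Y ⟶ X))
    {X A B : C} (f : F.obj X ⨯ A ⟶ X ⨯ B) : A ⟶ B :=
  prod.lift (dag (f ≫ prod.fst)) (𝟙 A) ≫ prod.map (p.app X) (𝟙 A) ≫ f ≫ prod.snd

theorem dag_snd_eq_id {C : Type*} [Category C] [HasFiniteProducts C]
    (F : C ⥤ C) (p : 𝟭 C ⟶ F)
    (dag : ∀ {X Y : C}, (F.obj X ⨯ Y ⟶ X) → (Y ⟶ X))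
    (hfix : ∀ {X Y : C} (f : F.obj X ⨯ Y ⟶ X),
      dag f = prod.lift (dag f) (𝟙 Y) ≫ prod.map (p.app X) (𝟙 Y) ≫ f)
    (X : C) : dag (prod.snd : F.obj X ⨯ X ⟶ X) = 𝟙 X := by
  rw [hfix, prod.map_snd, Category.comp_id, prod.lift_snd]

theorem stmt12 {C : Type*} [Category C] [HasFiniteProducts C]
    (F : C ⥤ C) (p : 𝟭 C ⟶ F)
    (dag : ∀ {X Y : C}, (F.obj X ⨯ Y ⟶ X) → (Y ⟶ X))
    (hfix : ∀ {X Y : C} (f : F.obj X ⨯ Y ⟶ X),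
      dag f = prod.lift (dag f) (𝟙 Y) ≫ prod.map (p.app X) (𝟙 Y) ≫ f) :
    ∀ X : C,
      TrD F p @dag (prod.lift (prod.snd : F.obj X ⨯ X ⟶ X) prod.fst) = p.app X := by
  intro X
  simp only [TrD, prod.lift_fst, prod.lift_snd, prod.lift_map_assoc, Category.comp_id,
    dag_snd_eq_id F p @dag hfix, Category.id_comp]
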